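/- Let $b \geq 4$, $r \in [1/b, 1)$, and let $M \subseteq \{0,\dots,b-2\}$ be a set of missing digits with $0 \in M$, $M$ containing no two consecutive integers, and such that $D := \{0,\dots,b-1\} \setminus M$ is a union of blocks of consecutive integers each of length at least $br$. Then the thickness of $\mathcal{C}_{b,D} := \{x \in [0,1] : x = \sum_{i<0} c_i b^i, \ c_i \in D\}$ is at least $r(b-2)$. -/

import Mathlib

/-- Newhouse thickness of a compact set `C ⊆ ℝ`: for each bounded gap `(a,b)` of `C`,
the left piece extends from `a` leftwards to the nearest right-endpoint of a gap of
length at least `b - a` (or to `sInf C`), similarly for the right piece; the thickness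
is the infimum over all gaps of `min |L| |R| / |G|`. -/
noncomputable def thickness (C : Set ℝ) : ℝ :=
  sInf { t : ℝ | ∃ a b : ℝ, a ∈ C ∧ b ∈ C ∧ a < b ∧ Set.Ioo a b ∩ C = ∅ ∧
    t = min
      (a - sSup (insert (sInf C)
        {d : ℝ | ∃ c : ℝ, c ∈ C ∧ d ∈ C ∧ c < d ∧ d ≤ a ∧ b - a ≤ d - c ∧ Set.Ioo c d ∩ C = ∅}))
      (sInf (insert (sSup C)
        {c : ℝ | ∃ d : ℝ, c ∈ C ∧ d ∈ C ∧ c < d ∧ b ≤ c ∧ b - a ≤ d - c ∧ Set.Ioo c d ∩ C = ∅}) - b)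
      / (b - a) }


/-- The set of reals in `[0,1]` admitting a base-`b` expansion with all digits in `D`. -/
noncomputable def CbD (b : ℕ) (D : Finset ℕ) : Set ℝ :=
  {x : ℝ | x ∈ Set.Icc (0 : ℝ) 1 ∧ ∃ c : ℕ → ℕ, (∀ i, c i ∈ D) ∧
    x = ∑' i : ℕ, (c i : ℝ) / (b : ℝ) ^ (i + 1)}

/-!
Every digit of `D` lies in `[1, b - 1]`, so distinct admissible digit sequences are ordered
lexicographically by their values, and a gap of `C_{b,D}` runs from the largest point with
prefix `p d` to the smallest point with prefix `p d'`, for consecutive digits `d < d'` of `D`.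
As no two consecutive digits are missing, its length is `1 / ((b - 1) b ^ j)` with `j = n + 1`
if `d' = d + 1` and `j = n` if `d' = d + 2`, where `n` is the length of `p`. Gaps at least this
long only open at digits `≤ j`, so the left piece of the gap covers the whole block of `D` ending
at the `j`-th digit of its left endpoint: a length at least `(b r - 1 / (b - 1)) / b ^ (j + 1)`,
and symmetrically on the right. Since `b r ≥ 1`, this is at least `r (b - 2)` times the gap.
-/

def IsGap (C : Set ℝ) (u v : ℝ) : Prop :=
  u ∈ C ∧ v ∈ C ∧ u < v ∧ Set.Ioo u v ∩ C = ∅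

theorem le_thickness {C : Set ℝ} {t : ℝ} (hbdd : BddBelow C) (hbdd' : BddAbove C)
    (hne : ∃ u v, IsGap C u v)
    (hleft : ∀ u v, IsGap C u v → ∃ w ∈ C, t * (v - u) ≤ u - w ∧
      ∀ c d, IsGap C c d → d ≤ u → v - u ≤ d - c → d ≤ w)
    (hright : ∀ u v, IsGap C u v → ∃ w ∈ C, t * (v - u) ≤ w - v ∧
      ∀ c d, IsGap C c d → v ≤ c → v - u ≤ d - c → w ≤ c) :
    t ≤ thickness C := by
  obtain ⟨u₀, v₀, hu₀, hv₀, huv₀, hgap₀⟩ := hne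
  refine le_csInf ⟨_, u₀, v₀, hu₀, hv₀, huv₀, hgap₀, rfl⟩ ?_
  rintro _ ⟨u, v, hu, hv, huv, hgap, rfl⟩
  obtain ⟨wl, hwl, htl, hl⟩ := hleft u v ⟨hu, hv, huv, hgap⟩
  obtain ⟨wr, hwr, htr, hr⟩ := hright u v ⟨hu, hv, huv, hgap⟩
  rw [le_div_iff₀ (sub_pos.2 huv)]
  refine le_min (htl.trans (sub_le_sub_left (csSup_le (Set.insert_nonempty _ _) ?_) u))
    (htr.trans (sub_le_sub_right (le_csInf (Set.insert_nonempty _ _) ?_) v))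
  · rintro z (rfl | ⟨c, hc, hz, hcz, hzu, hlen, hcz'⟩)
    · exact csInf_le hbdd hwl
    · exact hl c z ⟨hc, hz, hcz, hcz'⟩ hzu hlen
  · rintro z (rfl | ⟨d, hz, hd, hzd, hvz, hlen, hzd'⟩)
    · exact le_csSup hbdd' hwr
    · exact hr z d ⟨hz, hd, hzd, hzd'⟩ hvz hlen

noncomputable def expansion (b : ℕ) (σ : ℕ → ℕ) : ℝ := ∑' i, (σ i : ℝ) / (b : ℝ) ^ (i + 1)

noncomputable def partialExpansion (b n : ℕ) (σ : ℕ → ℕ) : ℝ :=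
  ∑ i ∈ Finset.range n, (σ i : ℝ) / (b : ℝ) ^ (i + 1)

section Expansion

theorem partialExpansion_succ_add (b n : ℕ) (σ : ℕ → ℕ) (a : ℝ) :
    partialExpansion b (n + 1) σ + a / (b : ℝ) ^ (n + 1) =
      partialExpansion b n σ + (σ n + a) / (b : ℝ) ^ (n + 1) := by
  rw [partialExpansion, partialExpansion, Finset.sum_range_succ, add_div]
  ring

variable {b n : ℕ} {σ τ : ℕ → ℕ}

theorem partialExpansion_congr (h : ∀ i < n, σ i = τ i) :
    partialExpansion b n σ = partialExpansion b n τ :=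
  Finset.sum_congr rfl fun i hi => by rw [h i (Finset.mem_range.1 hi)]

theorem one_add_inv_sub_one_div_pow (hb : 1 < b) (n : ℕ) :
    (1 + ((b : ℝ) - 1)⁻¹) / (b : ℝ) ^ (n + 1) = ((b : ℝ) - 1)⁻¹ / (b : ℝ) ^ n := by
  have : (b : ℝ) - 1 ≠ 0 := sub_ne_zero.2 (by exact_mod_cast hb.ne')
  field_simp
  ring

theorem hasSum_div_pow_add (hb : 1 < b) (c : ℝ) (n : ℕ) :
    HasSum (fun i : ℕ => c / (b : ℝ) ^ (i + n + 1)) (c / (((b : ℝ) - 1) * (b : ℝ) ^ n)) := by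
  have hb' : (1 : ℝ) < b := by exact_mod_cast hb
  have hne : (b : ℝ) - 1 ≠ 0 := sub_ne_zero.2 hb'.ne'
  have hterm : ∀ i : ℕ, c / (b : ℝ) ^ (i + n + 1) = c / (b : ℝ) ^ (n + 1) * (b : ℝ)⁻¹ ^ i :=
    fun i => by rw [inv_pow, ← div_eq_mul_inv, div_div, ← pow_add]; ring_nf
  have hsum : c / (((b : ℝ) - 1) * (b : ℝ) ^ n) = c / (b : ℝ) ^ (n + 1) * (1 - (b : ℝ)⁻¹)⁻¹ := by
    field_simp
    ring
  simpa only [hterm, hsum] using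
    (hasSum_geometric_of_lt_one (by positivity) (inv_lt_one_of_one_lt₀ hb')).mul_left
      (c / (b : ℝ) ^ (n + 1))

theorem expansion_eq_of_tail (hb : 1 < b) {c : ℕ} (h : ∀ i, n ≤ i → σ i = c) :
    expansion b σ = partialExpansion b n σ + c / (((b : ℝ) - 1) * (b : ℝ) ^ n) := by
  have htail : HasSum (fun i => (σ (i + n) : ℝ) / (b : ℝ) ^ (i + n + 1))
      (c / (((b : ℝ) - 1) * (b : ℝ) ^ n)) :=
    (hasSum_div_pow_add hb c n).congr_fun fun i => by simp only [h _ (Nat.le_add_left n i)]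
  rw [expansion, partialExpansion, ← htail.tsum_eq]
  exact ((summable_nat_add_iff (f := fun i => (σ i : ℝ) / (b : ℝ) ^ (i + 1)) n).1
    htail.summable).sum_add_tsum_nat_add n |>.symm

theorem expansion_eq_of_tail_top (hb : 1 < b) (h : ∀ i, n ≤ i → σ i = b - 1) :
    expansion b σ = partialExpansion b n σ + 1 / (b : ℝ) ^ n := by
  have : (b : ℝ) - 1 ≠ 0 := sub_ne_zero.2 (by exact_mod_cast hb.ne')
  rw [expansion_eq_of_tail hb h, Nat.cast_pred (by omega)]
  field_simp

theorem expansion_eq_of_tail_one (hb : 1 < b) (h : ∀ i, n ≤ i → σ i = 1) :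
    expansion b σ = partialExpansion b n σ + ((b : ℝ) - 1)⁻¹ / (b : ℝ) ^ n := by
  rw [expansion_eq_of_tail hb h, Nat.cast_one, ← div_div, one_div]

theorem expansion_eq_of_tail_top_succ (hb : 1 < b) (h : ∀ i, n < i → σ i = b - 1) :
    expansion b σ = partialExpansion b n σ + (σ n + 1) / (b : ℝ) ^ (n + 1) := by
  rw [expansion_eq_of_tail_top hb (n := n + 1) h, partialExpansion_succ_add]

theorem expansion_eq_of_tail_one_succ (hb : 1 < b) (h : ∀ i, n < i → σ i = 1) :
    expansion b σ =
      partialExpansion b n σ + (σ n + ((b : ℝ) - 1)⁻¹) / (b : ℝ) ^ (n + 1) := by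
  rw [expansion_eq_of_tail_one hb (n := n + 1) h, partialExpansion_succ_add]

theorem summable_expansion (hb : 1 < b) (hσ : ∀ i, σ i < b) :
    Summable fun i => (σ i : ℝ) / (b : ℝ) ^ (i + 1) := by
  refine Summable.of_nonneg_of_le (fun i => by positivity) (fun i => ?_)
    (by simpa using (hasSum_div_pow_add hb ((b : ℝ) - 1) 0).summable)
  gcongr
  exact le_sub_iff_add_le.2 (by exact_mod_cast hσ i)

theorem expansion_mono (hb : 1 < b) (h : ∀ i, σ i ≤ τ i) (hτ : ∀ i, τ i < b) :
    expansion b σ ≤ expansion b τ :=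
  Summable.tsum_le_tsum (fun i => by gcongr; exact h i)
    (summable_expansion hb fun i => (h i).trans_lt (hτ i)) (summable_expansion hb hτ)

theorem expansion_le (hb : 1 < b) (hσ : ∀ i, σ i < b) (n : ℕ) :
    expansion b σ ≤ partialExpansion b n σ + 1 / (b : ℝ) ^ n := by
  calc expansion b σ ≤ expansion b fun i => if i < n then σ i else b - 1 :=
        expansion_mono hb (fun i => by have := hσ i; split_ifs <;> omega)
          (fun i => by have := hσ i; split_ifs <;> omega)
    _ = partialExpansion b n σ + 1 / (b : ℝ) ^ n := by
        rw [expansion_eq_of_tail_top hb fun i hi => if_neg (not_lt.2 hi),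
          partialExpansion_congr fun i hi => if_pos hi]

theorem le_expansion (hb : 1 < b) (hσ : ∀ i, σ i ∈ Finset.Ico 1 b) (n : ℕ) :
    partialExpansion b n σ + ((b : ℝ) - 1)⁻¹ / (b : ℝ) ^ n ≤ expansion b σ := by
  calc partialExpansion b n σ + ((b : ℝ) - 1)⁻¹ / (b : ℝ) ^ n
        = expansion b fun i => if i < n then σ i else 1 := by
        rw [expansion_eq_of_tail_one hb fun i hi => if_neg (not_lt.2 hi),
          partialExpansion_congr fun i hi => if_pos hi]
    _ ≤ expansion b σ :=
        expansion_mono hb (fun i => by have := Finset.mem_Ico.1 (hσ i); split_ifs <;> omega)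
          (fun i => (Finset.mem_Ico.1 (hσ i)).2)

theorem expansion_le_succ (hb : 1 < b) (hσ : ∀ i, σ i < b) (n : ℕ) :
    expansion b σ ≤ partialExpansion b n σ + (σ n + 1) / (b : ℝ) ^ (n + 1) :=
  partialExpansion_succ_add b n σ 1 ▸ expansion_le hb hσ (n + 1)

theorem le_expansion_succ (hb : 1 < b) (hσ : ∀ i, σ i ∈ Finset.Ico 1 b) (n : ℕ) :
    partialExpansion b n σ + (σ n + ((b : ℝ) - 1)⁻¹) / (b : ℝ) ^ (n + 1) ≤ expansion b σ :=
  partialExpansion_succ_add b n σ _ ▸ le_expansion hb hσ (n + 1)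

theorem expansion_lt_expansion (hb : 1 < b) (hσ : ∀ i, σ i < b) (hτ : ∀ i, τ i ∈ Finset.Ico 1 b)
    {k : ℕ} (hagree : ∀ i < k, σ i = τ i) (hk : σ k < τ k) :
    expansion b σ < expansion b τ := by
  have hx : (0 : ℝ) < ((b : ℝ) - 1)⁻¹ := inv_pos.2 (sub_pos.2 (by exact_mod_cast hb))
  have hdigit : (σ k : ℝ) + 1 ≤ τ k := by exact_mod_cast hk
  calc expansion b σ ≤ partialExpansion b k σ + (σ k + 1) / (b : ℝ) ^ (k + 1) :=
        expansion_le_succ hb hσ k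
    _ < partialExpansion b k τ + (τ k + ((b : ℝ) - 1)⁻¹) / (b : ℝ) ^ (k + 1) := by
        have : ((σ k : ℝ) + 1) / (b : ℝ) ^ (k + 1) < (τ k + ((b : ℝ) - 1)⁻¹) / (b : ℝ) ^ (k + 1) :=
          div_lt_div_of_pos_right (by linarith) (by positivity)
        rw [partialExpansion_congr hagree]
        linarith
    _ ≤ expansion b τ := le_expansion_succ hb hτ k

theorem exists_lt_of_expansion_lt (hb : 1 < b) (hσ : ∀ i, σ i ∈ Finset.Ico 1 b)
    (hτ : ∀ i, τ i ∈ Finset.Ico 1 b) (h : expansion b σ < expansion b τ) :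
    ∃ k, (∀ i < k, σ i = τ i) ∧ σ k < τ k := by
  rcases lt_trichotomy (toLex σ) (toLex τ) with ⟨k, hagree, hk⟩ | heq | ⟨k, hagree, hk⟩
  · exact ⟨k, hagree, hk⟩
  · rw [toLex_inj.1 heq] at h
    exact absurd h (lt_irrefl _)
  · exact absurd h (expansion_lt_expansion hb (fun i => (Finset.mem_Ico.1 (hτ i)).2) hσ
      hagree hk).not_gt

/-- The two bounds are the least and the greatest value of a digit sequence that begins with the
first `n` digits of `q`. -/
theorem eq_of_mem_cell (hb : 1 < b) {q : ℕ → ℕ} (hq : ∀ i, q i ∈ Finset.Ico 1 b)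
    (hτ : ∀ i, τ i ∈ Finset.Ico 1 b)
    (hlo : partialExpansion b n q + ((b : ℝ) - 1)⁻¹ / (b : ℝ) ^ n ≤ expansion b τ)
    (hhi : expansion b τ ≤ partialExpansion b n q + 1 / (b : ℝ) ^ n) :
    ∀ i < n, τ i = q i := by
  classical
  by_contra! h
  obtain ⟨hkn, hk⟩ := Nat.find_spec h
  have hagree : ∀ i < Nat.find h, τ i = q i := fun i hi => by
    by_contra hne
    exact Nat.find_min h hi ⟨hi.trans hkn, hne⟩
  rcases lt_or_gt_of_ne hk with hlt | hgt
  · have hlt' := expansion_lt_expansion (τ := fun i => if i < n then q i else 1) hb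
      (fun i => (Finset.mem_Ico.1 (hτ i)).2)
      (fun i => by by_cases hi : i < n <;> simp [hi, hq i, hb]) (k := Nat.find h)
      (fun i hi => by simp [hagree i hi, hi.trans hkn]) (by simpa [hkn] using hlt)
    rw [expansion_eq_of_tail_one hb fun i hi => if_neg (not_lt.2 hi),
      partialExpansion_congr fun i hi => if_pos hi] at hlt'
    linarith
  · have hgt' := expansion_lt_expansion (σ := fun i => if i < n then q i else b - 1) hb
      (fun i => by by_cases hi : i < n <;> simp [hi, (Finset.mem_Ico.1 (hq i)).2]; omega) hτ
      (k := Nat.find h) (fun i hi => by simp [hagree i hi, hi.trans hkn]) (by simpa [hkn] using hgt)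
    rw [expansion_eq_of_tail_top hb fun i hi => if_neg (not_lt.2 hi),
      partialExpansion_congr fun i hi => if_pos hi] at hgt'
    linarith

end Expansion

structure AdmissibleDigits (b : ℕ) (D : Finset ℕ) : Prop where
  subset_Ico : D ⊆ Finset.Ico 1 b
  sub_one_mem : b - 1 ∈ D
  succ_mem_of_notMem : ∀ m, m + 1 < b → m ∉ D → m + 1 ∈ D

namespace AdmissibleDigits

variable {b : ℕ} {D : Finset ℕ} {σ : ℕ → ℕ}

theorem one_lt (hD : AdmissibleDigits b D) : 1 < b := by
  have := Finset.mem_Ico.1 (hD.subset_Ico hD.sub_one_mem)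
  omega

theorem zero_notMem (hD : AdmissibleDigits b D) : 0 ∉ D := fun h => by
  simpa using Finset.mem_Ico.1 (hD.subset_Ico h)

theorem one_mem (hD : AdmissibleDigits b D) : 1 ∈ D :=
  hD.succ_mem_of_notMem 0 hD.one_lt hD.zero_notMem

theorem lt_of_mem (hD : AdmissibleDigits b D) {d : ℕ} (hd : d ∈ D) : d < b :=
  (Finset.mem_Ico.1 (hD.subset_Ico hd)).2

theorem mem_Ico (hD : AdmissibleDigits b D) (hσ : ∀ i, σ i ∈ D) (i : ℕ) :
    σ i ∈ Finset.Ico 1 b :=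
  hD.subset_Ico (hσ i)

theorem lt (hD : AdmissibleDigits b D) (hσ : ∀ i, σ i ∈ D) (i : ℕ) : σ i < b :=
  hD.lt_of_mem (hσ i)

end AdmissibleDigits

theorem expansion_mem_CbD {b : ℕ} {D : Finset ℕ} {σ : ℕ → ℕ} (hb : 1 < b)
    (hD : ∀ d ∈ D, d < b) (hσ : ∀ i, σ i ∈ D) : expansion b σ ∈ CbD b D :=
  ⟨⟨tsum_nonneg fun i => by positivity,
    by simpa [partialExpansion] using expansion_le hb (fun i => hD _ (hσ i)) 0⟩, σ, hσ, rfl⟩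

/-- `(expansion b σ, expansion b τ)` is a gap of `CbD b D` opened at digit `n`. -/
structure IsGapAt (b : ℕ) (D : Finset ℕ) (σ τ : ℕ → ℕ) (n : ℕ) : Prop where
  left_mem : ∀ i, σ i ∈ D
  right_mem : ∀ i, τ i ∈ D
  eq_of_lt : ∀ i < n, σ i = τ i
  lt : σ n < τ n
  notMem : ∀ e, σ n < e → e < τ n → e ∉ D
  left_tail : ∀ i, n < i → σ i = b - 1
  right_tail : ∀ i, n < i → τ i = 1

theorem exists_isGapAt_of_isGap {b : ℕ} {D : Finset ℕ} (hD : AdmissibleDigits b D) {u v : ℝ}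
    (h : IsGap (CbD b D) u v) :
    ∃ σ τ n, u = expansion b σ ∧ v = expansion b τ ∧ IsGapAt b D σ τ n := by
  classical
  obtain ⟨⟨-, σ, hσ, rfl⟩, ⟨-, τ, hτ, rfl⟩, hlt, hempty⟩ := h
  have hb := hD.one_lt
  obtain ⟨n, hagree, hn⟩ :=
    exists_lt_of_expansion_lt hb (hD.mem_Ico hσ) (hD.mem_Ico hτ) hlt
  have between : ∀ ρ : ℕ → ℕ, (∀ i, ρ i ∈ D) → ∀ k l, (∀ i < k, σ i = ρ i) → σ k < ρ k →
      (∀ i < l, ρ i = τ i) → ρ l < τ l → False := fun ρ hρ k l h₁ h₂ h₃ h₄ =>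
    Set.eq_empty_iff_forall_notMem.1 hempty (expansion b ρ)
      ⟨⟨expansion_lt_expansion hb (hD.lt hσ) (hD.mem_Ico hρ) h₁ h₂,
        expansion_lt_expansion hb (hD.lt hρ) (hD.mem_Ico hτ) h₃ h₄⟩,
        expansion_mem_CbD hb (fun _ => hD.lt_of_mem) hρ⟩
  have update_mem : ∀ ρ : ℕ → ℕ, (∀ i, ρ i ∈ D) → ∀ k, ∀ e ∈ D, ∀ i, Function.update ρ k e i ∈ D :=
    fun ρ hρ k e he => Function.forall_update_iff _ (p := fun _ d => d ∈ D) |>.2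
      ⟨he, fun i _ => hρ i⟩
  refine ⟨σ, τ, n, rfl, rfl, hσ, hτ, hagree, hn, ?_, ?_, ?_⟩
  · intro e h₁ h₂ he
    exact between _ (update_mem σ hσ n e he) n n
      (fun i hi => by simp [hi.ne]) (by simpa using h₁)
      (fun i hi => by simpa [hi.ne] using hagree i hi) (by simpa using h₂)
  · intro i hi
    by_contra hne
    have := hD.lt hσ i
    exact between _ (update_mem σ hσ i _ hD.sub_one_mem) i n
      (fun j hj => by simp [hj.ne]) (by simp; omega)
      (fun j hj => by simpa [(hj.trans hi).ne] using hagree j hj) (by simpa [hi.ne] using hn)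
  · intro i hi
    by_contra hne
    have := Finset.mem_Ico.1 (hD.mem_Ico hτ i)
    exact between _ (update_mem τ hτ i _ hD.one_mem) n i
      (fun j hj => by simpa [(hj.trans hi).ne] using hagree j hj) (by simpa [hi.ne] using hn)
      (fun j hj => by simp [hj.ne]) (by simp; omega)

namespace IsGapAt

variable {b : ℕ} {D : Finset ℕ} {σ τ : ℕ → ℕ} {n : ℕ}

theorem le_add_two (hD : AdmissibleDigits b D) (h : IsGapAt b D σ τ n) : τ n ≤ σ n + 2 := by
  by_contra! hlt
  have := hD.lt h.right_mem n
  exact h.notMem (σ n + 2) (by omega) (by omega) <| hD.succ_mem_of_notMem (σ n + 1) (by omega)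
    (h.notMem _ (by omega) (by omega))

theorem expansion_sub (hD : AdmissibleDigits b D) (h : IsGapAt b D σ τ n) :
    expansion b τ - expansion b σ =
      ((τ n : ℝ) - σ n - 1 + ((b : ℝ) - 1)⁻¹) / (b : ℝ) ^ (n + 1) := by
  rw [expansion_eq_of_tail_one_succ hD.one_lt h.right_tail,
    expansion_eq_of_tail_top_succ hD.one_lt h.left_tail, partialExpansion_congr h.eq_of_lt]
  ring

theorem le_of_lt_expansion_sub (hD : AdmissibleDigits b D) (h : IsGapAt b D σ τ n) {j : ℕ}
    (hlong : ((b : ℝ) - 1)⁻¹ / (b : ℝ) ^ (j + 1) < expansion b τ - expansion b σ) : n ≤ j := by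
  have hb : (1 : ℝ) < b := by exact_mod_cast hD.one_lt
  by_contra! hjn
  have hτ : (τ n : ℝ) ≤ σ n + 2 := by exact_mod_cast h.le_add_two hD
  have hshort : expansion b τ - expansion b σ ≤ ((b : ℝ) - 1)⁻¹ / (b : ℝ) ^ n := by
    rw [h.expansion_sub hD, ← one_add_inv_sub_one_div_pow hD.one_lt]
    gcongr
    linarith
  have : ((b : ℝ) - 1)⁻¹ / (b : ℝ) ^ n ≤ ((b : ℝ) - 1)⁻¹ / (b : ℝ) ^ (j + 1) :=
    div_le_div_of_nonneg_left (inv_pos.2 (by linarith)).le (by positivity)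
      (pow_le_pow_right₀ hb.le hjn)
  linarith

theorem eq_add_two_of_lt_expansion_sub (hD : AdmissibleDigits b D) (h : IsGapAt b D σ τ n)
    (hlong : ((b : ℝ) - 1)⁻¹ / (b : ℝ) ^ (n + 1) < expansion b τ - expansion b σ) :
    τ n = σ n + 2 ∧ σ n + 1 ∉ D := by
  have hb : (0 : ℝ) < b := by exact_mod_cast zero_lt_one.trans hD.one_lt
  rw [h.expansion_sub hD, div_lt_div_iff_of_pos_right (by positivity)] at hlong
  have : σ n + 1 < τ n := by
    have : (σ n : ℝ) + 1 < τ n := by linarith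
    exact_mod_cast this
  have := h.le_add_two hD
  exact ⟨by omega, h.notMem _ (by omega) (by omega)⟩

/-- At digit `j` the left endpoint is at the top of a block of `D` and the right endpoint at the
bottom of one; `j = n` if a digit is missing between `σ n` and `τ n`, and `j = n + 1` otherwise. -/
theorem exists_level (hD : AdmissibleDigits b D) (h : IsGapAt b D σ τ n) :
    ∃ j, (∀ i, j < i → σ i = b - 1) ∧ σ j + 1 ∉ D ∧ (∀ i, j < i → τ i = 1) ∧ τ j - 1 ∉ D ∧
      expansion b τ - expansion b σ = ((b : ℝ) - 1)⁻¹ / (b : ℝ) ^ j := by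
  have := h.lt
  rcases (show τ n = σ n + 1 ∨ τ n = σ n + 2 by have := h.le_add_two hD; omega) with h₁ | h₂
  · refine ⟨n + 1, fun i hi => h.left_tail i (by omega), ?_, fun i hi => h.right_tail i (by omega),
      ?_, ?_⟩
    · rw [h.left_tail _ n.lt_succ_self]
      intro hmem
      have := Finset.mem_Ico.1 (hD.subset_Ico hmem)
      omega
    · rw [h.right_tail _ n.lt_succ_self]
      exact hD.zero_notMem
    · rw [h.expansion_sub hD, h₁]
      push_cast
      ring
  · refine ⟨n, h.left_tail, h.notMem _ (by omega) (by omega), h.right_tail,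
      h.notMem _ (by omega) (by omega), ?_⟩
    rw [h.expansion_sub hD, h₂, ← one_add_inv_sub_one_div_pow hD.one_lt]
    push_cast
    ring

theorem isGap (hD : AdmissibleDigits b D) (h : IsGapAt b D σ τ n) :
    IsGap (CbD b D) (expansion b σ) (expansion b τ) := by
  have hb := hD.one_lt
  have hlt : ∀ d ∈ D, d < b := fun _ => hD.lt_of_mem
  refine ⟨expansion_mem_CbD hb hlt h.left_mem, expansion_mem_CbD hb hlt h.right_mem,
    expansion_lt_expansion hb (hD.lt h.left_mem) (hD.mem_Ico h.right_mem) h.eq_of_lt h.lt,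
    Set.eq_empty_iff_forall_notMem.2 ?_⟩
  rintro _ ⟨⟨h₁, h₂⟩, -, ρ, hρ, rfl⟩
  obtain ⟨k, hk, hσρ⟩ := exists_lt_of_expansion_lt hb (hD.mem_Ico h.left_mem) (hD.mem_Ico hρ) h₁
  obtain ⟨l, hl, hρτ⟩ := exists_lt_of_expansion_lt hb (hD.mem_Ico hρ) (hD.mem_Ico h.right_mem) h₂
  have hρ1 := Finset.mem_Ico.1 (hD.mem_Ico hρ k)
  have hρ1' := Finset.mem_Ico.1 (hD.mem_Ico hρ l)
  rcases lt_trichotomy k n with hkn | rfl | hkn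
  · refine (expansion_lt_expansion hb (hD.lt h.right_mem) (hD.mem_Ico hρ) (k := k)
      (fun i hi => (h.eq_of_lt i (hi.trans hkn)).symm.trans (hk i hi)) ?_).not_gt h₂
    rwa [← h.eq_of_lt k hkn]
  · rcases lt_trichotomy l k with hlk | rfl | hlk
    · refine (expansion_lt_expansion hb (hD.lt hρ) (hD.mem_Ico h.left_mem) (k := l)
        (fun i hi => (hl i hi).trans (h.eq_of_lt i (hi.trans hlk)).symm) ?_).not_gt h₁
      rwa [h.eq_of_lt l hlk]
    · exact h.notMem (ρ l) hσρ hρτ (hρ l)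
    · have := h.right_tail l hlk
      omega
  · have := h.left_tail k hkn
    omega

theorem expansion_right_le (hD : AdmissibleDigits b D) (h : IsGapAt b D σ τ n) {ρ : ℕ → ℕ}
    (hρ : ∀ i, ρ i ∈ D) {j c : ℕ} (hc : Finset.Icc c (ρ j) ⊆ D)
    (hle : expansion b τ ≤ expansion b ρ)
    (hlong : ((b : ℝ) - 1)⁻¹ / (b : ℝ) ^ (j + 1) < expansion b τ - expansion b σ) :
    expansion b τ ≤ partialExpansion b j ρ + (c + ((b : ℝ) - 1)⁻¹) / (b : ℝ) ^ (j + 1) := by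
  have hb := hD.one_lt
  have hx : (0 : ℝ) < ((b : ℝ) - 1)⁻¹ := inv_pos.2 (sub_pos.2 (by exact_mod_cast hb))
  have hc₁ : 1 ≤ c := by
    by_contra! hc₀
    obtain rfl : c = 0 := by omega
    exact hD.zero_notMem (hc (Finset.mem_Icc.2 ⟨le_rfl, Nat.zero_le _⟩))
  by_contra! hlt
  have hcell : partialExpansion b j ρ + ((b : ℝ) - 1)⁻¹ / (b : ℝ) ^ j ≤
      partialExpansion b j ρ + (c + ((b : ℝ) - 1)⁻¹) / (b : ℝ) ^ (j + 1) := by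
    rw [← one_add_inv_sub_one_div_pow hb]
    gcongr
    exact_mod_cast hc₁
  have hpre : ∀ i < j, τ i = ρ i := eq_of_mem_cell hb (hD.mem_Ico hρ) (hD.mem_Ico h.right_mem)
    (hcell.trans hlt.le) (hle.trans (expansion_le hb (hD.lt hρ) j))
  rcases (h.le_of_lt_expansion_sub hD hlong).lt_or_eq with hnj | rfl
  · have : expansion b τ = partialExpansion b j ρ + ((b : ℝ) - 1)⁻¹ / (b : ℝ) ^ j := by
      rw [expansion_eq_of_tail_one hb (n := j) fun i hi => h.right_tail i (by omega),
        partialExpansion_congr hpre]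
    linarith
  · obtain ⟨htwo, hmiss⟩ := h.eq_add_two_of_lt_expansion_sub hD hlong
    have hp : (0 : ℝ) < (b : ℝ) ^ (n + 1) := by positivity
    have hτ : expansion b τ =
        partialExpansion b n ρ + (τ n + ((b : ℝ) - 1)⁻¹) / (b : ℝ) ^ (n + 1) := by
      rw [expansion_eq_of_tail_one_succ hb h.right_tail, partialExpansion_congr hpre]
    have hρn := expansion_le_succ hb (hD.lt hρ) n
    rw [hτ] at hlt hle
    have h₁ : (c : ℝ) < τ n := by
      have := (div_lt_div_iff_of_pos_right hp).1 (lt_of_add_lt_add_left hlt)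
      linarith
    have h₂ : (τ n : ℝ) < ρ n + 1 := by
      have := (div_le_div_iff_of_pos_right hp).1 (le_of_add_le_add_left (hle.trans hρn))
      linarith
    have h₁' : c < τ n := by exact_mod_cast h₁
    have h₂' : τ n < ρ n + 1 := by exact_mod_cast h₂
    exact hmiss (hc (Finset.mem_Icc.2 ⟨by omega, by omega⟩))

theorem le_expansion_left (hD : AdmissibleDigits b D) (h : IsGapAt b D σ τ n) {ρ : ℕ → ℕ}
    (hρ : ∀ i, ρ i ∈ D) {j c : ℕ} (hc : Finset.Icc (ρ j) c ⊆ D)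
    (hle : expansion b ρ ≤ expansion b σ)
    (hlong : ((b : ℝ) - 1)⁻¹ / (b : ℝ) ^ (j + 1) < expansion b τ - expansion b σ) :
    partialExpansion b j ρ + (c + 1) / (b : ℝ) ^ (j + 1) ≤ expansion b σ := by
  have hb := hD.one_lt
  have hx : (0 : ℝ) < ((b : ℝ) - 1)⁻¹ := inv_pos.2 (sub_pos.2 (by exact_mod_cast hb))
  have hcb : c < b := by
    by_contra! hcb
    have := hD.lt hρ j
    exact (Finset.mem_Ico.1 (hD.subset_Ico (hc (Finset.mem_Icc.2 ⟨by omega, le_rfl⟩)))).2.not_ge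
      hcb
  by_contra! hlt
  have hcell : partialExpansion b j ρ + (c + 1) / (b : ℝ) ^ (j + 1) ≤
      partialExpansion b j ρ + 1 / (b : ℝ) ^ j := by
    have hb' : (b : ℝ) ≠ 0 := by positivity
    rw [show (1 : ℝ) / (b : ℝ) ^ j = b / (b : ℝ) ^ (j + 1) by rw [pow_succ]; field_simp]
    gcongr
    exact_mod_cast hcb
  have hpre : ∀ i < j, σ i = ρ i := eq_of_mem_cell hb (hD.mem_Ico hρ) (hD.mem_Ico h.left_mem)
    ((le_expansion hb (hD.mem_Ico hρ) j).trans hle) (hlt.le.trans hcell)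
  rcases (h.le_of_lt_expansion_sub hD hlong).lt_or_eq with hnj | rfl
  · have : expansion b σ = partialExpansion b j ρ + 1 / (b : ℝ) ^ j := by
      rw [expansion_eq_of_tail_top hb (n := j) fun i hi => h.left_tail i (by omega),
        partialExpansion_congr hpre]
    linarith
  · obtain ⟨-, hmiss⟩ := h.eq_add_two_of_lt_expansion_sub hD hlong
    have hp : (0 : ℝ) < (b : ℝ) ^ (n + 1) := by positivity
    have hσ : expansion b σ = partialExpansion b n ρ + (σ n + 1) / (b : ℝ) ^ (n + 1) := by
      rw [expansion_eq_of_tail_top_succ hb h.left_tail, partialExpansion_congr hpre]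
    have hρn := le_expansion_succ hb (hD.mem_Ico hρ) n
    rw [hσ] at hlt hle
    have h₁ : (σ n : ℝ) < c := by
      have := (div_lt_div_iff_of_pos_right hp).1 (lt_of_add_lt_add_left hlt)
      linarith
    have h₂ : (ρ n : ℝ) < σ n + 1 := by
      have := (div_le_div_iff_of_pos_right hp).1 (le_of_add_le_add_left (hρn.trans hle))
      linarith
    have h₁' : σ n < c := by exact_mod_cast h₁
    have h₂' : ρ n < σ n + 1 := by exact_mod_cast h₂
    exact hmiss (hc (Finset.mem_Icc.2 ⟨by omega, by omega⟩))

end IsGapAt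

theorem AdmissibleDigits.exists_isGap {b : ℕ} {D : Finset ℕ} (hD : AdmissibleDigits b D)
    (hb : 3 ≤ b) : ∃ u v, IsGap (CbD b D) u v := by
  classical
  have hex : ∃ e, 1 < e ∧ e ∈ D := ⟨b - 1, by omega, hD.sub_one_mem⟩
  obtain ⟨he₁, heD⟩ := Nat.find_spec hex
  refine ⟨_, _, IsGapAt.isGap hD (σ := fun i => if i = 0 then 1 else b - 1)
    (τ := fun i => if i = 0 then Nat.find hex else 1) (n := 0) ⟨?_, ?_, ?_, ?_, ?_, ?_, ?_⟩⟩
  · intro i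
    split_ifs
    exacts [hD.one_mem, hD.sub_one_mem]
  · intro i
    split_ifs
    exacts [heD, hD.one_mem]
  · intro i hi
    omega
  · simpa using he₁
  · intro e h₁ h₂ he
    simp only [if_pos] at h₁ h₂
    exact Nat.find_min hex h₂ ⟨h₁, he⟩
  · intro i hi
    simp [hi.ne']
  · intro i hi
    simp [hi.ne']

def HasLongBlocks (D : Finset ℕ) (ℓ : ℝ) : Prop :=
  ∀ d ∈ D, ∃ a l : ℕ, ℓ ≤ l ∧ d ∈ Finset.Ico a (a + l) ∧ Finset.Ico a (a + l) ⊆ D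

namespace HasLongBlocks

variable {D : Finset ℕ} {ℓ : ℝ} {d : ℕ}

theorem exists_Icc_of_succ_notMem (h : HasLongBlocks D ℓ) (hd : d ∈ D) (hd₁ : d + 1 ∉ D) :
    ∃ c ≤ d, Finset.Icc c d ⊆ D ∧ ℓ ≤ (d : ℝ) + 1 - c := by
  obtain ⟨a, l, hl, hda, hsub⟩ := h d hd
  have hda := Finset.mem_Ico.1 hda
  have hend : a + l = d + 1 := by
    by_contra hne
    exact hd₁ (hsub (Finset.mem_Ico.2 ⟨by omega, by omega⟩))
  refine ⟨a, hda.1, fun e he => hsub (Finset.mem_Ico.2 ?_), ?_⟩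
  · have := Finset.mem_Icc.1 he
    omega
  · have : (a : ℝ) + l = d + 1 := by exact_mod_cast hend
    linarith

theorem exists_Icc_of_pred_notMem (h : HasLongBlocks D ℓ) (hd : d ∈ D) (hd₁ : d - 1 ∉ D) :
    ∃ c ≥ d, Finset.Icc d c ⊆ D ∧ ℓ ≤ (c : ℝ) + 1 - d := by
  obtain ⟨a, l, hl, hda, hsub⟩ := h d hd
  have hda := Finset.mem_Ico.1 hda
  obtain rfl : a = d := by
    by_contra hne
    exact hd₁ (hsub (Finset.mem_Ico.2 ⟨by omega, by omega⟩))
  refine ⟨a + l - 1, by omega, fun e he => hsub (Finset.mem_Ico.2 ?_), ?_⟩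
  · have := Finset.mem_Icc.1 he
    omega
  · rw [Nat.cast_sub (by omega)]
    push_cast
    linarith

end HasLongBlocks

section Pieces

variable {b : ℕ} {D : Finset ℕ} {ℓ : ℝ} {j : ℕ}

theorem inv_sub_one_div_pow_succ_lt (hb : 1 < b) (j : ℕ) :
    ((b : ℝ) - 1)⁻¹ / (b : ℝ) ^ (j + 1) < ((b : ℝ) - 1)⁻¹ / (b : ℝ) ^ j := by
  have hb' : (1 : ℝ) < b := by exact_mod_cast hb
  exact div_lt_div_of_pos_left (inv_pos.2 (sub_pos.2 hb')) (by positivity)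
    (pow_lt_pow_right₀ hb' j.lt_succ_self)

theorem exists_left_piece (hD : AdmissibleDigits b D) (hblk : HasLongBlocks D ℓ) {σ : ℕ → ℕ}
    (hσ : ∀ i, σ i ∈ D) (htail : ∀ i, j < i → σ i = b - 1) (hσj : σ j + 1 ∉ D) :
    ∃ w ∈ CbD b D, (ℓ - ((b : ℝ) - 1)⁻¹) / (b : ℝ) ^ (j + 1) ≤ expansion b σ - w ∧
      ∀ u v, IsGap (CbD b D) u v → v ≤ expansion b σ →
        ((b : ℝ) - 1)⁻¹ / (b : ℝ) ^ j ≤ v - u → v ≤ w := by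
  have hb := hD.one_lt
  obtain ⟨c, hcj, hcD, hℓ⟩ := hblk.exists_Icc_of_succ_notMem (hσ j) hσj
  set ρ : ℕ → ℕ := fun i => if i < j then σ i else if i = j then c else 1
  have hρD : ∀ i, ρ i ∈ D := fun i => by
    simp only [ρ]
    split_ifs
    exacts [hσ i, hcD (Finset.mem_Icc.2 ⟨le_rfl, hcj⟩), hD.one_mem]
  have hρ : expansion b ρ =
      partialExpansion b j σ + (c + ((b : ℝ) - 1)⁻¹) / (b : ℝ) ^ (j + 1) := by
    rw [expansion_eq_of_tail_one_succ hb (n := j) fun i hi => by simp [ρ, hi.ne', not_lt.2 hi.le],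
      partialExpansion_congr fun i hi => if_pos hi]
    simp [ρ]
  refine ⟨expansion b ρ, expansion_mem_CbD hb (fun _ => hD.lt_of_mem) hρD, ?_, ?_⟩
  · rw [hρ, expansion_eq_of_tail_top_succ hb htail, add_sub_add_left_eq_sub, ← sub_div]
    exact div_le_div_of_nonneg_right (by linarith) (by positivity)
  · intro u v huv hv hlen
    obtain ⟨σ', τ', m, rfl, rfl, h⟩ := exists_isGapAt_of_isGap hD huv
    rw [hρ]
    exact h.expansion_right_le hD hσ hcD hv ((inv_sub_one_div_pow_succ_lt hb j).trans_le hlen)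

theorem exists_right_piece (hD : AdmissibleDigits b D) (hblk : HasLongBlocks D ℓ) {τ : ℕ → ℕ}
    (hτ : ∀ i, τ i ∈ D) (htail : ∀ i, j < i → τ i = 1) (hτj : τ j - 1 ∉ D) :
    ∃ w ∈ CbD b D, (ℓ - ((b : ℝ) - 1)⁻¹) / (b : ℝ) ^ (j + 1) ≤ w - expansion b τ ∧
      ∀ u v, IsGap (CbD b D) u v → expansion b τ ≤ u →
        ((b : ℝ) - 1)⁻¹ / (b : ℝ) ^ j ≤ v - u → w ≤ u := by
  have hb := hD.one_lt
  obtain ⟨c, hjc, hcD, hℓ⟩ := hblk.exists_Icc_of_pred_notMem (hτ j) hτj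
  set ρ : ℕ → ℕ := fun i => if i < j then τ i else if i = j then c else b - 1
  have hρD : ∀ i, ρ i ∈ D := fun i => by
    simp only [ρ]
    split_ifs
    exacts [hτ i, hcD (Finset.mem_Icc.2 ⟨hjc, le_rfl⟩), hD.sub_one_mem]
  have hρ : expansion b ρ = partialExpansion b j τ + (c + 1) / (b : ℝ) ^ (j + 1) := by
    rw [expansion_eq_of_tail_top_succ hb (n := j) fun i hi => by simp [ρ, hi.ne', not_lt.2 hi.le],
      partialExpansion_congr fun i hi => if_pos hi]
    simp [ρ]
  refine ⟨expansion b ρ, expansion_mem_CbD hb (fun _ => hD.lt_of_mem) hρD, ?_, ?_⟩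
  · rw [hρ, expansion_eq_of_tail_one_succ hb htail, add_sub_add_left_eq_sub, ← sub_div]
    exact div_le_div_of_nonneg_right (by linarith) (by positivity)
  · intro u v huv hu hlen
    obtain ⟨σ', τ', m, rfl, rfl, h⟩ := exists_isGapAt_of_isGap hD huv
    rw [hρ]
    exact h.le_expansion_left hD hτ hcD hu ((inv_sub_one_div_pow_succ_lt hb j).trans_le hlen)

end Pieces

theorem gap_mul_le_piece {β r : ℝ} (hβ : 1 < β) (hr : 1 ≤ β * r) (j : ℕ) :
    r * (β - 2) * ((β - 1)⁻¹ / β ^ j) ≤ (β * r - (β - 1)⁻¹) / β ^ (j + 1) := by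
  have hβ₁ : 0 < β - 1 := sub_pos.2 hβ
  have hβ₀ : β ≠ 0 := by positivity
  have key : r * (β - 2) * (β - 1)⁻¹ * β + (β - 1)⁻¹ ≤ β * r :=
    calc r * (β - 2) * (β - 1)⁻¹ * β + (β - 1)⁻¹ = (r * (β - 2) * β + 1) * (β - 1)⁻¹ := by ring
      _ ≤ β * r * (β - 1) * (β - 1)⁻¹ := by gcongr; nlinarith
      _ = β * r := by field_simp
  calc r * (β - 2) * ((β - 1)⁻¹ / β ^ j) = r * (β - 2) * (β - 1)⁻¹ * β / β ^ (j + 1) := by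
        rw [pow_succ]; field_simp
    _ ≤ (β * r - (β - 1)⁻¹) / β ^ (j + 1) := by gcongr; linarith

theorem admissibleDigits_range_sdiff {b : ℕ} {Ms : Finset ℕ} (hMsub : Ms ⊆ Finset.range (b - 1))
    (h0 : 0 ∈ Ms) (hnc : ∀ m ∈ Ms, m + 1 ∉ Ms) : AdmissibleDigits b (Finset.range b \ Ms) := by
  have hb := Finset.mem_range.1 (hMsub h0)
  refine ⟨fun d hd => ?_, ?_, fun m hm hmD => ?_⟩
  · obtain ⟨hdb, hdM⟩ := Finset.mem_sdiff.1 hd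
    have : d ≠ 0 := by rintro rfl; exact hdM h0
    exact Finset.mem_Ico.2 ⟨by omega, Finset.mem_range.1 hdb⟩
  · exact Finset.mem_sdiff.2 ⟨Finset.mem_range.2 (by omega),
      fun h => by have := Finset.mem_range.1 (hMsub h); omega⟩
  · have hmM : m ∈ Ms := by
      by_contra h
      exact hmD (Finset.mem_sdiff.2 ⟨Finset.mem_range.2 (by omega), h⟩)
    exact Finset.mem_sdiff.2 ⟨Finset.mem_range.2 hm, hnc m hmM⟩

/-- If the missing-digit set `Ms ⊆ {0,…,b-2}` contains `0`, has no two consecutive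
integers, and its complement `D = {0,…,b-1} \ Ms` is a union of blocks of consecutive
integers of length at least `b·r`, then `τ(C_{b,D}) ≥ r(b-2)`. -/
theorem thickness_CbD_ge (b : ℕ) (hb : 4 ≤ b) (r : ℝ) (hr : r ∈ Set.Ico (1 / (b : ℝ)) 1)
    (Ms : Finset ℕ) (hMsub : Ms ⊆ Finset.range (b - 1)) (h0 : 0 ∈ Ms)
    (hnc : ∀ m ∈ Ms, m + 1 ∉ Ms)
    (hblocks : ∀ d ∈ Finset.range b \ Ms, ∃ a l : ℕ,
      (b : ℝ) * r ≤ (l : ℝ) ∧ d ∈ Finset.Ico a (a + l) ∧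
      Finset.Ico a (a + l) ⊆ Finset.range b \ Ms) :
    r * ((b : ℝ) - 2) ≤ thickness (CbD b (Finset.range b \ Ms)) := by
  have hD := admissibleDigits_range_sdiff hMsub h0 hnc
  have hb' : (1 : ℝ) < b := by exact_mod_cast hD.one_lt
  have hbr : 1 ≤ (b : ℝ) * r := by
    rw [mul_comm]
    exact (div_le_iff₀ (by positivity)).1 hr.1
  have hC : CbD b (Finset.range b \ Ms) ⊆ Set.Icc 0 1 := fun _ hx => hx.1
  refine le_thickness (bddBelow_Icc.mono hC) (bddAbove_Icc.mono hC) (hD.exists_isGap (by omega))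
    (fun u v huv => ?_) (fun u v huv => ?_)
  all_goals
    obtain ⟨σ, τ, n, rfl, rfl, h⟩ := exists_isGapAt_of_isGap hD huv
    obtain ⟨j, hσtail, hσj, hτtail, hτj, hlen⟩ := h.exists_level hD
    rw [hlen]
  · obtain ⟨w, hw, hpiece, hmax⟩ := exists_left_piece hD hblocks h.left_mem hσtail hσj
    exact ⟨w, hw, (gap_mul_le_piece hb' hbr j).trans hpiece, hmax⟩
  · obtain ⟨w, hw, hpiece, hmax⟩ := exists_right_piece hD hblocks h.right_mem hτtail hτj
    exact ⟨w, hw, (gap_mul_le_piece hb' hbr j).trans hpiece, hmax⟩
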